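/- If G is a claw-free finite simple graph and H is any finite simple graph, then the weak {2}-domination number of the Cartesian product G □ H is at least γ(G)·γ(H): γ_{w{2}}(G □ H) ≥ γ(G)γ(H). -/

import Mathlib

open SimpleGraph Finset
open scoped Classical

/-- The closed neighborhood of `v` as a finset. -/
noncomputable def closedNbr {V : Type*} [Fintype V] (G : SimpleGraph V) (v : V) : Finset V :=
  Finset.univ.filter (fun u => u = v ∨ G.Adj u v)

/-- `S` is a dominating set of `G`. -/
def IsDomSet {V : Type*} (G : SimpleGraph V) (S : Finset V) : Prop :=
  ∀ v, v ∉ S → ∃ u ∈ S, G.Adj u v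

/-- The domination number γ(G). -/
noncomputable def domNum (V : Type*) [Fintype V] (G : SimpleGraph V) : ℕ :=
  sInf {n | ∃ S : Finset V, IsDomSet G S ∧ S.card = n}

/-- `S` is an independent dominating set of `G`. -/
def IsIndepDomSet {V : Type*} (G : SimpleGraph V) (S : Finset V) : Prop :=
  IsDomSet G S ∧ ∀ u ∈ S, ∀ v ∈ S, ¬ G.Adj u v

/-- The independent domination number i(G). -/
noncomputable def indepDomNum (V : Type*) [Fintype V] (G : SimpleGraph V) : ℕ :=
  sInf {n | ∃ S : Finset V, IsIndepDomSet G S ∧ S.card = n}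

/-- `S` is a 2-dominating set of `G`. -/
noncomputable def IsTwoDomSet {V : Type*} [Fintype V] (G : SimpleGraph V) (S : Finset V) : Prop :=
  ∀ v, v ∉ S → 2 ≤ (S.filter (fun u => G.Adj u v)).card

/-- The 2-domination number γ₂(G). -/
noncomputable def twoDomNum (V : Type*) [Fintype V] (G : SimpleGraph V) : ℕ :=
  sInf {n | ∃ S : Finset V, IsTwoDomSet G S ∧ S.card = n}

/-- `f` is a {k}-dominating function on `G`. -/
noncomputable def IsKDomFun {V : Type*} [Fintype V] (G : SimpleGraph V) (k : ℕ) (f : V → ℕ) : Prop :=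
  (∀ v, f v ≤ k) ∧ ∀ v, k ≤ ∑ u ∈ closedNbr G v, f u

/-- The {k}-domination number γ_{k}(G). -/
noncomputable def kDomNum (V : Type*) [Fintype V] (G : SimpleGraph V) (k : ℕ) : ℕ :=
  sInf {w | ∃ f : V → ℕ, IsKDomFun G k f ∧ w = ∑ v, f v}

/-- `f` is a weak {k}-dominating function on `G`. -/
noncomputable def IsWeakKDomFun {V : Type*} [Fintype V] (G : SimpleGraph V) (k : ℕ) (f : V → ℕ) : Prop :=
  (∀ v, f v ≤ k) ∧ ∀ v, f v = 0 → k ≤ ∑ u ∈ closedNbr G v, f u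

/-- The weak {k}-domination number γ_{w{k}}(G). -/
noncomputable def weakKDomNum (V : Type*) [Fintype V] (G : SimpleGraph V) (k : ℕ) : ℕ :=
  sInf {w | ∃ f : V → ℕ, IsWeakKDomFun G k f ∧ w = ∑ v, f v}

/-- `G` is claw-free: no induced K_{1,3}. -/
def ClawFree {V : Type*} (G : SimpleGraph V) : Prop :=
  ¬ ∃ v a b c : V, a ≠ b ∧ a ≠ c ∧ b ≠ c ∧
    G.Adj v a ∧ G.Adj v b ∧ G.Adj v c ∧ ¬ G.Adj a b ∧ ¬ G.Adj a c ∧ ¬ G.Adj b c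

/-!
By the Allan–Laskar theorem a claw-free graph `G` has an independent dominating set `S` with
`|S| = γ(G)`. Fix a weak {2}-dominating function `f` on `G □ H`. For `g ∈ S`, the vertices `h`
such that `f (g, h) ≠ 0` or `f` puts weight at least `2` on the `G`-neighbours of `g` in the
column `V × {h}` dominate `H`, so there are at least `γ(H)` of them. On the other hand, the weight
of `f` on a column `V × {h}` is at least the number of such `g ∈ S`: directly when `f (g, h) ≠ 0`,
and otherwise because claw-freeness and independence let a vertex outside `S` be adjacent to at
most two vertices of `S`.
-/

section

variable {V : Type*} {G : SimpleGraph V}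

def IsPrivateNbr (G : SimpleGraph V) (S : Finset V) (u x : V) : Prop :=
  x ∉ S ∧ G.Adj u x ∧ ∀ y ∈ S, G.Adj y x → y = u

noncomputable def adjPairs (G : SimpleGraph V) (S : Finset V) : Finset (V × V) :=
  (S ×ˢ S).filter fun p => G.Adj p.1 p.2

theorem adjPairs_insert_of_forall_not_adj {T : Finset V} {w : V}
    (hw : ∀ y ∈ T, ¬G.Adj w y) : adjPairs G (insert w T) = adjPairs G T := by
  ext ⟨a, b⟩
  simp only [adjPairs, mem_filter, mem_product, mem_insert]
  constructor
  · rintro ⟨⟨rfl | ha, rfl | hb⟩, hab⟩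
    · exact absurd hab G.irrefl
    · exact absurd hab (hw b hb)
    · exact absurd hab.symm (hw a ha)
    · exact ⟨⟨ha, hb⟩, hab⟩
  · rintro ⟨⟨ha, hb⟩, hab⟩
    exact ⟨⟨Or.inr ha, Or.inr hb⟩, hab⟩

theorem adjPairs_erase_ssubset {S : Finset V} {u v : V} (hu : u ∈ S) (hv : v ∈ S)
    (huv : G.Adj u v) : adjPairs G (S.erase u) ⊂ adjPairs G S := by
  refine ssubset_of_subset_of_ne
    (filter_subset_filter _ (product_subset_product (erase_subset u S) (erase_subset u S))) ?_
  intro h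
  have huv_mem : (u, v) ∈ adjPairs G S := mem_filter.2 ⟨mem_product.2 ⟨hu, hv⟩, huv⟩
  rw [← h] at huv_mem
  simp [adjPairs] at huv_mem

theorem ClawFree.adj_of_isPrivateNbr (hG : ClawFree G) {S : Finset V} {u v a b : V}
    (hv : v ∈ S) (huv : G.Adj u v) (ha : IsPrivateNbr G S u a) (hb : IsPrivateNbr G S u b)
    (hab : a ≠ b) : G.Adj a b := by
  by_contra hnab
  have hnv : ∀ {x}, IsPrivateNbr G S u x → ¬G.Adj v x := fun hx hvx =>
    huv.ne (hx.2.2 v hv hvx).symm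
  exact hG ⟨u, v, a, b, fun h => ha.1 (h ▸ hv), fun h => hb.1 (h ▸ hv), hab, huv, ha.2.1, hb.2.1,
    hnv ha, hnv hb, hnab⟩

/-- Removing a vertex `u` that has a neighbour in `S` only endangers its private neighbours. -/
theorem IsDomSet.of_erase_subset {S T : Finset V} {u v : V} (hS : IsDomSet G S) (hv : v ∈ S)
    (huv : G.Adj u v) (hST : S.erase u ⊆ T)
    (hpriv : ∀ x ∉ T, IsPrivateNbr G S u x → ∃ y ∈ T, G.Adj y x) : IsDomSet G T := by
  intro x hxT
  by_cases hother : ∃ y ∈ S, y ≠ u ∧ G.Adj y x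
  · obtain ⟨y, hy, hyu, hyx⟩ := hother
    exact ⟨y, hST (mem_erase.2 ⟨hyu, hy⟩), hyx⟩
  push Not at hother
  have hxu : x ≠ u := by
    rintro rfl
    exact hother v hv huv.ne' huv.symm
  have hxS : x ∉ S := fun hx => hxT (hST (mem_erase.2 ⟨hxu, hx⟩))
  obtain ⟨y, hy, hyx⟩ := hS x hxS
  have hyu : y = u := by_contra fun hyu => hother y hy hyu hyx
  refine hpriv x hxT ⟨hxS, hyu ▸ hyx, fun z hz hzx => ?_⟩
  exact by_contra fun hzu => hother z hz hzu hzx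

theorem ClawFree.card_filter_adj_le_two (hG : ClawFree G) {S : Finset V}
    (hS : ∀ u ∈ S, ∀ v ∈ S, ¬G.Adj u v) (x : V) : #{g ∈ S | G.Adj g x} ≤ 2 := by
  by_contra! h
  obtain ⟨a, ha, b, hb, c, hc, hab, hac, hbc⟩ := two_lt_card.1 h
  rw [mem_filter] at ha hb hc
  exact hG ⟨x, a, b, c, hab, hac, hbc, ha.2.symm, hb.2.symm, hc.2.symm,
    hS a ha.1 b hb.1, hS a ha.1 c hc.1, hS b hb.1 c hc.1⟩

variable [Fintype V]

theorem IsDomSet.domNum_le_card {S : Finset V} (hS : IsDomSet G S) : domNum V G ≤ #S :=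
  Nat.sInf_le ⟨S, hS, rfl⟩

theorem exists_isDomSet_card_eq_domNum (G : SimpleGraph V) :
    ∃ S : Finset V, IsDomSet G S ∧ #S = domNum V G :=
  Nat.sInf_mem (s := {n | ∃ S : Finset V, IsDomSet G S ∧ #S = n})
    ⟨_, univ, fun v hv => absurd (mem_univ v) hv, rfl⟩

theorem le_weakKDomNum {k n : ℕ}
    (h : ∀ f : V → ℕ, IsWeakKDomFun G k f → n ≤ ∑ v, f v) : n ≤ weakKDomNum V G k := by
  apply le_csInf
  · exact ⟨_, fun _ => k, ⟨fun _ => le_rfl, fun _ h0 => by simp_all⟩, rfl⟩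
  · rintro _ ⟨f, hf, rfl⟩
    exact h f hf

/-- In a minimum dominating set of a claw-free graph, an edge `uv` can be removed: either `u` has
no private neighbour (impossible by minimality), or `u` can be traded for one of them, since they
form a clique and have no neighbour in `S` other than `u`. -/
theorem ClawFree.exists_isDomSet_adjPairs_lt (hG : ClawFree G) {S : Finset V}
    (hS : IsDomSet G S) (hmin : #S = domNum V G) {u v : V} (hu : u ∈ S) (hv : v ∈ S)
    (huv : G.Adj u v) :
    ∃ T : Finset V, IsDomSet G T ∧ #T = #S ∧ #(adjPairs G T) < #(adjPairs G S) := by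
  by_cases hP : ∃ w, IsPrivateNbr G S u w
  · obtain ⟨w, hw⟩ := hP
    have hwS : w ∉ S.erase u := fun h => hw.1 (mem_of_mem_erase h)
    refine ⟨insert w (S.erase u), ?_, ?_, ?_⟩
    · refine hS.of_erase_subset hv huv (subset_insert w _) fun x hxT hx => ?_
      have hxw : w ≠ x := fun h => hxT (h ▸ mem_insert_self w _)
      exact ⟨w, mem_insert_self w _, hG.adj_of_isPrivateNbr hv huv hw hx hxw⟩
    · rw [card_insert_of_notMem hwS, card_erase_add_one hu]
    · rw [adjPairs_insert_of_forall_not_adj fun y hy hwy =>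
        (mem_erase.1 hy).1 (hw.2.2 y (mem_of_mem_erase hy) hwy.symm)]
      exact card_lt_card (adjPairs_erase_ssubset hu hv huv)
  · push Not at hP
    have hdom : IsDomSet G (S.erase u) :=
      hS.of_erase_subset hv huv subset_rfl fun x _ hx => absurd hx (hP x)
    have := hdom.domNum_le_card
    have := card_erase_add_one hu
    omega

/-- Allan–Laskar: in a claw-free graph, `i(G) = γ(G)`. -/
theorem ClawFree.exists_isIndepDomSet_card_eq_domNum (hG : ClawFree G) :
    ∃ S : Finset V, IsIndepDomSet G S ∧ #S = domNum V G := by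
  obtain ⟨S₀, hS₀⟩ := exists_isDomSet_card_eq_domNum G
  obtain ⟨S, hS, hS_min⟩ := (univ.filter fun S : Finset V => IsDomSet G S ∧ #S = domNum V G)
    |>.exists_min_image (fun S => #(adjPairs G S)) ⟨S₀, mem_filter.2 ⟨mem_univ S₀, hS₀⟩⟩
  obtain ⟨-, hdom, hcard⟩ := mem_filter.1 hS
  refine ⟨S, ⟨hdom, fun u hu v hv huv => ?_⟩, hcard⟩
  obtain ⟨T, hT, hTS, hlt⟩ := hG.exists_isDomSet_adjPairs_lt hdom hcard hu hv huv
  exact (hS_min T (mem_filter.2 ⟨mem_univ T, hT, hTS.trans hcard⟩)).not_gt hlt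

noncomputable def IsHeavy (G : SimpleGraph V) (f : V → ℕ) (g : V) : Prop :=
  f g ≠ 0 ∨ 2 ≤ ∑ x ∈ G.neighborFinset g, f x

theorem ClawFree.card_filter_isHeavy_le_sum (hG : ClawFree G) {S : Finset V}
    (hS : ∀ u ∈ S, ∀ v ∈ S, ¬G.Adj u v) (f : V → ℕ) :
    #{g ∈ S | IsHeavy G f g} ≤ ∑ g, f g := by
  set B := S.filter fun g => 2 ≤ ∑ x ∈ G.neighborFinset g, f x
  have hA : #{g ∈ S | f g ≠ 0} ≤ ∑ g ∈ S, f g :=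
    calc #{g ∈ S | f g ≠ 0} = ∑ g ∈ S with f g ≠ 0, 1 := card_eq_sum_ones _
      _ ≤ ∑ g ∈ S with f g ≠ 0, f g :=
          sum_le_sum fun g hg => Nat.one_le_iff_ne_zero.2 (mem_filter.1 hg).2
      _ ≤ ∑ g ∈ S, f g := sum_le_sum_of_subset (filter_subset _ _)
  have hB : 2 * #B ≤ 2 * ∑ x ∈ Sᶜ, f x :=
    calc 2 * #B = ∑ _g ∈ B, 2 := by rw [sum_const, smul_eq_mul, mul_comm]
      _ ≤ ∑ g ∈ B, ∑ x ∈ univ.bipartiteAbove G.Adj g, f x := sum_le_sum fun g hg => by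
          simpa [bipartiteAbove, neighborFinset_eq_filter] using (mem_filter.1 hg).2
      _ = ∑ x, ∑ _g ∈ B.bipartiteBelow G.Adj x, f x :=
          sum_sum_bipartiteAbove_eq_sum_sum_bipartiteBelow _ _
      _ = ∑ x ∈ Sᶜ, #(B.bipartiteBelow G.Adj x) * f x := by
          simp_rw [sum_const, smul_eq_mul]
          refine (sum_subset (subset_univ _) fun x _ hx => ?_).symm
          have hx_empty : B.bipartiteBelow G.Adj x = ∅ := filter_eq_empty_iff.2 fun g hg =>
            hS g (mem_filter.1 hg).1 x (by simpa using hx)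
          rw [hx_empty, card_empty, zero_mul]
      _ ≤ ∑ x ∈ Sᶜ, 2 * f x := sum_le_sum fun x _ => Nat.mul_le_mul_right _
          ((card_le_card (filter_subset_filter _ (filter_subset _ _))).trans
            (hG.card_filter_adj_le_two hS x))
      _ = 2 * ∑ x ∈ Sᶜ, f x := (mul_sum _ _ _).symm
  calc #{g ∈ S | IsHeavy G f g} = #({g ∈ S | f g ≠ 0} ∪ B) := by
        rw [← filter_or]
        exact congrArg card (filter_congr fun _ _ => Iff.rfl)
    _ ≤ ∑ g ∈ S, f g + ∑ x ∈ Sᶜ, f x := (card_union_le _ _).trans (by omega)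
    _ = ∑ g, f g := sum_add_sum_compl S f

end

section

variable {V W : Type*} [Fintype V] [Fintype W] {G : SimpleGraph V} {H : SimpleGraph W}

theorem closedNbr_boxProd (g : V) (h : W) :
    closedNbr (G □ H) (g, h) =
      insert (g, h) (G.neighborFinset g ×ˢ {h} ∪ {g} ×ˢ H.neighborFinset h) := by
  ext ⟨a, b⟩
  simp only [closedNbr, mem_filter, mem_univ, true_and, boxProd_adj, mem_insert, mem_union,
    mem_product, mem_singleton, mem_neighborFinset]
  constructor
  · rintro (hab | ⟨hab, rfl⟩ | ⟨hab, rfl⟩)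
    · exact Or.inl hab
    · exact Or.inr (Or.inl ⟨hab.symm, rfl⟩)
    · exact Or.inr (Or.inr ⟨rfl, hab.symm⟩)
  · rintro (hab | ⟨hab, rfl⟩ | ⟨rfl, hab⟩)
    · exact Or.inl hab
    · exact Or.inr (Or.inl ⟨hab.symm, rfl⟩)
    · exact Or.inr (Or.inr ⟨hab.symm, rfl⟩)

theorem sum_closedNbr_boxProd (f : V × W → ℕ) (g : V) (h : W) :
    ∑ u ∈ closedNbr (G □ H) (g, h), f u =
      f (g, h) + ∑ g' ∈ G.neighborFinset g, f (g', h) + ∑ h' ∈ H.neighborFinset h, f (g, h') := by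
  have hdisj : Disjoint (G.neighborFinset g ×ˢ {h}) ({g} ×ˢ H.neighborFinset h) :=
    disjoint_left.2 fun p hp hp' => by
      rw [mem_product, mem_neighborFinset] at hp
      rw [mem_product, mem_singleton] at hp'
      exact G.irrefl (hp'.1 ▸ hp.1)
  rw [closedNbr_boxProd, sum_insert (by simp), sum_union hdisj, sum_product, sum_product]
  simp only [sum_singleton, add_assoc]

/-- In the column `V × {h}` through a non-heavy `(g, h)` the weight near `(g, h)` is at most `1`,
so weak {2}-domination forces weight on `{g} × N(h)`. -/
theorem isDomSet_filter_isHeavy {f : V × W → ℕ} (hf : IsWeakKDomFun (G □ H) 2 f) (g : V) :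
    IsDomSet H {h | IsHeavy G (fun g' => f (g', h)) g} := by
  intro h hh
  by_contra! hno
  simp only [IsHeavy, mem_filter, mem_univ, true_and, not_or, not_le, not_not] at hh hno
  have hrow : ∑ h' ∈ H.neighborFinset h, f (g, h') = 0 :=
    sum_eq_zero fun h' hh' => by_contra fun hne =>
      hno h' (Or.inl hne) ((mem_neighborFinset _ _ _).1 hh').symm
  have := hf.2 (g, h) hh.1
  rw [sum_closedNbr_boxProd, hh.1, hrow] at this
  omega

end

theorem stmt6 {V W : Type*} [Fintype V] [Fintype W]
    (G : SimpleGraph V) (H : SimpleGraph W) (hG : ClawFree G) :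
    domNum V G * domNum W H ≤ weakKDomNum (V × W) (G □ H) 2 := by
  refine le_weakKDomNum fun f hf => ?_
  obtain ⟨S, ⟨-, hS_indep⟩, hS_card⟩ := hG.exists_isIndepDomSet_card_eq_domNum
  let heavy : V → W → Prop := fun g h => IsHeavy G (fun g' => f (g', h)) g
  calc domNum V G * domNum W H = ∑ _g ∈ S, domNum W H := by
        rw [sum_const, smul_eq_mul, hS_card]
    _ ≤ ∑ g ∈ S, #(univ.bipartiteAbove heavy g) :=
        sum_le_sum fun g _ => (isDomSet_filter_isHeavy hf g).domNum_le_card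
    _ = ∑ h, #(S.bipartiteBelow heavy h) :=
        sum_card_bipartiteAbove_eq_sum_card_bipartiteBelow _
    _ ≤ ∑ h, ∑ g, f (g, h) := sum_le_sum fun h _ => hG.card_filter_isHeavy_le_sum hS_indep _
    _ = ∑ v, f v := by rw [sum_comm, Fintype.sum_prod_type]
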